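/- Let K be a field with char K ≠ 2, let D ∈ S_K with deg D = 2d, and let p, q ∈ K[T] be coprime polynomials with q ≠ 0. Then p/q is, up to sign, a convergent of √D (i.e. there is a convergent p_n/q_n of √D with p/q = ±p_n/q_n) if and only if deg(p² − D·q²) ≤ d − 1. -/

import Mathlib

noncomputable section

namespace PaperCF

variable {K : Type*} [Field K]

/-- The element `T` of `K((T⁻¹))`, where `K((T⁻¹))` is modeled as the field
`LaurentSeries K` of Laurent series in the variable `t = T⁻¹`. -/
def Tvar (K : Type*) [Field K] : LaurentSeries K := (HahnSeries.single (-1 : ℤ) (1 : K))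

/-- The embedding of `K[T]` into `K((T⁻¹))`, sending the polynomial variable to `T = t⁻¹`. -/
def emb : Polynomial K →+* LaurentSeries K := (Polynomial.aeval (Tvar K)).toRingHom

/-- The polynomial part `⌊α⌋` of a formal Laurent series `α ∈ K((T⁻¹))`. -/
def polyPart (α : LaurentSeries K) : Polynomial K :=
  ∑ i ∈ Finset.range ((-α.order).toNat + 1), Polynomial.monomial i (α.coeff (-(i : ℤ)))

/-- The complete quotients `αₙ` of the regular continued fraction expansion of `α`
(with the convention `0⁻¹ = 0`, so that `cq α n = 0` for all `n` past the end of a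
finite expansion). -/
def cq (α : LaurentSeries K) : ℕ → LaurentSeries K
  | 0 => α
  | n + 1 => (cq α n - emb (polyPart (cq α n)))⁻¹

/-- The partial quotients `aₙ = ⌊αₙ⌋` of the regular continued fraction expansion of `α`. -/
def pq (α : LaurentSeries K) (n : ℕ) : Polynomial K := polyPart (cq α n)

/-- The continuants `(pₙ, qₙ)` of the regular continued fraction expansion of `α`. -/
def cont (α : LaurentSeries K) : ℕ → Polynomial K × Polynomial K
  | 0 => (pq α 0, 1)
  | 1 => (pq α 1 * pq α 0 + 1, pq α 1)
  | n + 2 => (pq α (n + 2) * (cont α (n + 1)).1 + (cont α n).1,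
              pq α (n + 2) * (cont α (n + 1)).2 + (cont α n).2)

/-- `pₙ`. -/
def contP (α : LaurentSeries K) (n : ℕ) : Polynomial K := (cont α n).1

/-- `qₙ`. -/
def contQ (α : LaurentSeries K) (n : ℕ) : Polynomial K := (cont α n).2

/-- The `n`-th partial quotient (and hence the `n`-th convergent) of `α` genuinely exists. -/
def ConvAt (α : LaurentSeries K) (n : ℕ) : Prop := n = 0 ∨ cq α n ≠ 0

/-- `K(α) = sup_{n ≥ 1} deg aₙ`, as an extended natural number. -/
def KK (α : LaurentSeries K) : ℕ∞ :=
  ⨆ n : {n : ℕ // 1 ≤ n ∧ cq α n ≠ 0}, ((pq α n.1).natDegree : ℕ∞)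

/-- `ōK(α) = limsup_n deg aₙ`. -/
def KKbar (α : LaurentSeries K) : ℕ∞ :=
  Filter.limsup (fun n => ((pq α n).natDegree : ℕ∞)) Filter.atTop

/-- `α` is a rational function, i.e. an element of `K(T) ⊆ K((T⁻¹))`. -/
def IsRat (α : LaurentSeries K) : Prop :=
  ∃ p q : Polynomial K, q ≠ 0 ∧ α * emb q = emb p

/-- Two Laurent series are equivalent if they differ by a Möbius transformation with
matrix in `GL₂(K[T])`. -/
def MEquiv (α β : LaurentSeries K) : Prop :=
  ∃ a b c d : Polynomial K, IsUnit (a * d - b * c) ∧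
    emb c * α + emb d ≠ 0 ∧ β = (emb a * α + emb b) / (emb c * α + emb d)

end PaperCF

/-!
Here `order` is the paper's `ord`, so `ord (emb f) = -deg f`. Put `u = q√D - p` and
`v = q√D + p`. Then `uv = Dq² - p²`, while `u + v = 2q√D` has order `-(d + deg q)` because
`char K ≠ 2`. Hence `deg (p² - Dq²) < d` exactly when `ord u > deg q` or `ord v > deg q`.

For an irrational `α` and coprime `p, q`, the condition `ord (qα - p) > deg q` characterizes the
convergents. The errors `Eₙ = qₙα - pₙ` satisfy `αₙ₊₂ Eₙ₊₁ = -Eₙ`, whence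
`ord Eₙ = deg qₙ₊₁ > deg qₙ`. Conversely, choosing `n` with `deg qₙ ≤ deg q < deg qₙ₊₁`, the
polynomial `pqₙ - pₙq = q Eₙ - qₙ (qα - p)` has positive order, so it vanishes.
-/

open Polynomial

namespace HahnSeries

variable {Γ R : Type*}

theorem order_add_of_order_lt [LinearOrder Γ] [Zero Γ] [AddMonoid R] {x y : HahnSeries Γ R}
    (hx : x ≠ 0) (hy : y ≠ 0) (h : x.order < y.order) : (x + y).order = x.order := by
  have htop : (x + y).orderTop = x.orderTop := orderTop_add_eq_left (by
    rw [← order_eq_orderTop_of_ne_zero hx, ← order_eq_orderTop_of_ne_zero hy]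
    exact WithTop.coe_lt_coe.mpr h)
  have hxy : x + y ≠ 0 := fun h0 => hx (orderTop_eq_top.mp (by rw [← htop, h0, orderTop_zero]))
  exact WithTop.coe_injective
    ((order_eq_orderTop_of_ne_zero hxy).trans (htop.trans (order_eq_orderTop_of_ne_zero hx).symm))

theorem order_inv [AddCommGroup Γ] [LinearOrder Γ] [IsOrderedAddMonoid Γ] [Field R]
    {x : HahnSeries Γ R} (hx : x ≠ 0) : x⁻¹.order = -x.order := by
  have h := order_mul hx (inv_ne_zero hx)
  rw [mul_inv_cancel₀ hx, order_one] at h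
  exact eq_neg_of_add_eq_zero_right h.symm

end HahnSeries

namespace PaperCF

open HahnSeries

variable {K : Type*} [Field K]

theorem emb_monomial (n : ℕ) (c : K) : emb (monomial n c) = single (-(n : ℤ)) c := by
  have hT : Tvar K ^ n = single (-(n : ℤ)) 1 := by
    induction n with
    | zero => simp [Tvar]
    | succ n ih =>
      rw [pow_succ, ih, Tvar, single_mul_single, one_mul, Nat.cast_succ, neg_add]
  rw [emb, AlgHom.toRingHom_eq_coe, RingHom.coe_coe, aeval_monomial, hT, algebraMap_apply',
    show algebraMap K (PowerSeries K) c = PowerSeries.C c from rfl, ofPowerSeries_C, C_apply,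
    single_mul_single, zero_add, mul_one]

theorem coeff_emb_neg (f : K[X]) (n : ℕ) : (emb f).coeff (-(n : ℤ)) = f.coeff n := by
  induction f using Polynomial.induction_on' with
  | add f g hf hg => simp [hf, hg]
  | monomial m c =>
    rw [emb_monomial, coeff_monomial, coeff_single]
    by_cases h : n = m
    · simp [h]
    · simp [h, Ne.symm h]

theorem coeff_emb_of_pos (f : K[X]) {j : ℤ} (hj : 0 < j) : (emb f).coeff j = 0 := by
  induction f using Polynomial.induction_on' with
  | add f g hf hg => simp [hf, hg]
  | monomial m c => rw [emb_monomial, coeff_single_of_ne (by omega)]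

theorem emb_injective : Function.Injective (emb : K[X] →+* LaurentSeries K) := by
  intro f g h
  ext n
  rw [← coeff_emb_neg, h, coeff_emb_neg]

theorem emb_ne_zero {f : K[X]} (hf : f ≠ 0) : emb f ≠ 0 :=
  (map_ne_zero_iff _ emb_injective).mpr hf

theorem order_emb {f : K[X]} (hf : f ≠ 0) : (emb f).order = -(f.natDegree : ℤ) := by
  refine le_antisymm (order_le_of_coeff_ne_zero ?_) ?_
  · rwa [coeff_emb_neg, coeff_natDegree, Polynomial.leadingCoeff_ne_zero]
  · by_contra! hlt
    have hc := mt coeff_order_eq_zero.mp (emb_ne_zero hf)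
    rcases lt_or_ge 0 (emb f).order with hpos | hnonpos
    · exact hc (coeff_emb_of_pos f hpos)
    · rw [show (emb f).order = -((-(emb f).order).toNat : ℤ) by omega, coeff_emb_neg] at hc
      exact hc (coeff_eq_zero_of_natDegree_lt (by omega))

theorem coeff_polyPart (α : LaurentSeries K) (k : ℕ) :
    (polyPart α).coeff k = if k ≤ (-α.order).toNat then α.coeff (-(k : ℤ)) else 0 := by
  rw [polyPart, finsetSum_coeff]
  split_ifs with h
  · rw [Finset.sum_eq_single k (fun i _ hi => by simp [coeff_monomial, hi])
      (fun hk => absurd (Finset.mem_range.mpr (by omega)) hk)]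
    simp
  · exact Finset.sum_eq_zero fun i hi => by
      rw [coeff_monomial, if_neg]
      rw [Finset.mem_range] at hi
      omega

theorem order_sub_polyPart_pos {α : LaurentSeries K} (h : α - emb (polyPart α) ≠ 0) :
    0 < (α - emb (polyPart α)).order := by
  by_contra! hle
  apply mt coeff_order_eq_zero.mp h
  set j := (α - emb (polyPart α)).order
  have hj : j = -((-j).toNat : ℤ) := by omega
  rw [HahnSeries.coeff_sub, hj, coeff_emb_neg, coeff_polyPart]
  split_ifs with hk
  · exact sub_self _
  · rw [sub_zero, ← hj]
    exact coeff_eq_zero_of_lt_order (by omega)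

theorem natDegree_polyPart {α : LaurentSeries K} (h : α.order < 0) :
    ((polyPart α).natDegree : ℤ) = -α.order := by
  set N := (-α.order).toNat
  have hcN : (polyPart α).coeff N ≠ 0 := by
    rw [coeff_polyPart, if_pos le_rfl, show -(N : ℤ) = α.order by omega]
    exact mt coeff_order_eq_zero.mp (by rintro rfl; simp at h)
  have hle : (polyPart α).natDegree ≤ N := natDegree_le_iff_coeff_eq_zero.mpr fun m hm => by
    rw [coeff_polyPart, if_neg (by exact_mod_cast hm.not_ge)]
  have := le_natDegree_of_ne_zero hcN
  omega

theorem ne_zero_of_not_isRat {α : LaurentSeries K} (h : ¬IsRat α) : α ≠ 0 :=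
  fun h0 => h ⟨0, 1, one_ne_zero, by simp [h0]⟩

theorem emb_mul_sub_emb_ne_zero {α : LaurentSeries K} (h : ¬IsRat α) {q : K[X]} (hq : q ≠ 0)
    (p : K[X]) : emb q * α - emb p ≠ 0 :=
  fun h0 => h ⟨p, q, hq, by rw [mul_comm]; exact sub_eq_zero.mp h0⟩

theorem not_isRat_sub_emb {α : LaurentSeries K} (h : ¬IsRat α) (f : K[X]) :
    ¬IsRat (α - emb f) := by
  rintro ⟨p, q, hq, hpq⟩
  exact h ⟨p + f * q, q, hq, by rw [map_add, map_mul, ← hpq]; ring⟩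

theorem not_isRat_inv {α : LaurentSeries K} (h : ¬IsRat α) : ¬IsRat α⁻¹ := by
  rintro ⟨p, q, hq, hpq⟩
  have hp : p ≠ 0 := by
    rintro rfl
    simp [ne_zero_of_not_isRat h, emb_ne_zero hq] at hpq
  refine h ⟨q, p, hp, ?_⟩
  rw [← hpq, ← mul_assoc, mul_inv_cancel₀ (ne_zero_of_not_isRat h), one_mul]

theorem not_isRat_cq {α : LaurentSeries K} (h : ¬IsRat α) (n : ℕ) : ¬IsRat (cq α n) := by
  induction n with
  | zero => exact h
  | succ n ih => exact not_isRat_inv (not_isRat_sub_emb ih _)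

theorem cq_ne_zero {α : LaurentSeries K} (h : ¬IsRat α) (n : ℕ) : cq α n ≠ 0 :=
  ne_zero_of_not_isRat (not_isRat_cq h n)

theorem emb_pq (α : LaurentSeries K) (n : ℕ) :
    emb (pq α n) = cq α n - (cq α (n + 1))⁻¹ := by
  rw [cq, inv_inv, pq, sub_sub_cancel]

theorem order_cq_succ_neg {α : LaurentSeries K} (h : ¬IsRat α) (n : ℕ) :
    (cq α (n + 1)).order < 0 := by
  have hfrac := ne_zero_of_not_isRat (not_isRat_sub_emb (not_isRat_cq h n) (polyPart (cq α n)))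
  rw [cq, order_inv hfrac, neg_neg_iff_pos]
  exact order_sub_polyPart_pos hfrac

theorem natDegree_pq_succ {α : LaurentSeries K} (h : ¬IsRat α) (n : ℕ) :
    ((pq α (n + 1)).natDegree : ℤ) = -(cq α (n + 1)).order :=
  natDegree_polyPart (order_cq_succ_neg h n)

theorem one_le_natDegree_pq_succ {α : LaurentSeries K} (h : ¬IsRat α) (n : ℕ) :
    1 ≤ (pq α (n + 1)).natDegree := by
  have := natDegree_pq_succ h n
  have := order_cq_succ_neg h n
  omega

theorem contQ_add_two (α : LaurentSeries K) (n : ℕ) :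
    contQ α (n + 2) = pq α (n + 2) * contQ α (n + 1) + contQ α n := rfl

theorem natDegree_contQ_succ {α : LaurentSeries K} (h : ¬IsRat α) (n : ℕ) :
    (contQ α (n + 1)).natDegree = (pq α (n + 1)).natDegree + (contQ α n).natDegree := by
  induction n with
  | zero => simp [contQ, cont]
  | succ n ih =>
    have ha : 1 ≤ (pq α (n + 2)).natDegree := one_le_natDegree_pq_succ h (n + 1)
    have ha' := one_le_natDegree_pq_succ h n
    have hmul := natDegree_mul (p := pq α (n + 2)) (q := contQ α (n + 1))
      (ne_zero_of_natDegree_gt (n := 0) (by omega)) (ne_zero_of_natDegree_gt (n := 0) (by omega))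
    rw [contQ_add_two, natDegree_add_eq_left_of_natDegree_lt (by omega), hmul]

theorem contQ_ne_zero {α : LaurentSeries K} (h : ¬IsRat α) (n : ℕ) : contQ α n ≠ 0 := by
  cases n with
  | zero => exact one_ne_zero
  | succ n =>
    have := natDegree_contQ_succ h n
    have := one_le_natDegree_pq_succ h n
    exact ne_zero_of_natDegree_gt (n := 0) (by omega)

theorem natDegree_contQ_lt_succ {α : LaurentSeries K} (h : ¬IsRat α) (n : ℕ) :
    (contQ α n).natDegree < (contQ α (n + 1)).natDegree := by
  have := natDegree_contQ_succ h n
  have := one_le_natDegree_pq_succ h n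
  omega

theorem exists_natDegree_contQ_le_lt_succ {α : LaurentSeries K} (h : ¬IsRat α) (N : ℕ) :
    ∃ n, (contQ α n).natDegree ≤ N ∧ N < (contQ α (n + 1)).natDegree := by
  have hmono : StrictMono fun n => (contQ α n).natDegree :=
    strictMono_nat_of_lt_succ (natDegree_contQ_lt_succ h)
  have hex : ∃ m, N < (contQ α m).natDegree :=
    ⟨N + 1, Nat.lt_of_succ_le (hmono.id_le (N + 1))⟩
  obtain ⟨n, hn⟩ : ∃ n, Nat.find hex = n + 1 :=
    Nat.exists_eq_succ_of_ne_zero fun h0 => by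
      have := Nat.find_spec hex
      rw [h0] at this
      simp [contQ, cont] at this
  exact ⟨n, not_lt.mp (Nat.find_min hex (by omega)), hn ▸ Nat.find_spec hex⟩

def approxErr (α : LaurentSeries K) (n : ℕ) : LaurentSeries K :=
  emb (contQ α n) * α - emb (contP α n)

theorem approxErr_ne_zero {α : LaurentSeries K} (h : ¬IsRat α) (n : ℕ) :
    approxErr α n ≠ 0 :=
  emb_mul_sub_emb_ne_zero h (contQ_ne_zero h n) _

theorem approxErr_zero (α : LaurentSeries K) : approxErr α 0 = (cq α 1)⁻¹ := by
  rw [approxErr, show contQ α 0 = 1 from rfl, show contP α 0 = pq α 0 from rfl, emb_pq, map_one,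
    one_mul, cq, sub_sub_cancel]

theorem approxErr_one (α : LaurentSeries K) :
    approxErr α 1 = emb (pq α 1) * approxErr α 0 - 1 := by
  simp only [approxErr, contQ, contP, cont, map_add, map_mul, map_one]
  ring

theorem approxErr_add_two (α : LaurentSeries K) (n : ℕ) :
    approxErr α (n + 2) = emb (pq α (n + 2)) * approxErr α (n + 1) + approxErr α n := by
  simp only [approxErr, contQ, contP, cont, map_add, map_mul]
  ring

theorem cq_mul_approxErr_succ {α : LaurentSeries K} (h : ¬IsRat α) (n : ℕ) :
    cq α (n + 2) * approxErr α (n + 1) = -approxErr α n := by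
  induction n with
  | zero =>
    rw [approxErr_one, approxErr_zero, emb_pq]
    linear_combination cq α 2 * mul_inv_cancel₀ (cq_ne_zero h 1) -
      (cq α 1)⁻¹ * mul_inv_cancel₀ (cq_ne_zero h 2)
  | succ n ih =>
    rw [approxErr_add_two, emb_pq]
    linear_combination cq α (n + 3) * ih -
      approxErr α (n + 1) * mul_inv_cancel₀ (cq_ne_zero h (n + 3))

theorem order_approxErr {α : LaurentSeries K} (h : ¬IsRat α) (n : ℕ) :
    (approxErr α n).order = (contQ α (n + 1)).natDegree := by
  induction n with
  | zero =>
    rw [approxErr_zero, order_inv (cq_ne_zero h 1), natDegree_contQ_succ h 0,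
      ← natDegree_pq_succ h 0]
    simp [contQ, cont]
  | succ n ih =>
    have hmul := congrArg order (cq_mul_approxErr_succ h n)
    rw [order_mul (cq_ne_zero h (n + 2)) (approxErr_ne_zero h (n + 1)), order_neg, ih] at hmul
    have ha : ((pq α (n + 2)).natDegree : ℤ) = -(cq α (n + 2)).order :=
      natDegree_pq_succ h (n + 1)
    have hq : (contQ α (n + 2)).natDegree =
        (pq α (n + 2)).natDegree + (contQ α (n + 1)).natDegree :=
      natDegree_contQ_succ h (n + 1)
    rw [hq]
    push_cast
    omega

theorem exists_convergent_of_natDegree_lt_order {α : LaurentSeries K} (h : ¬IsRat α)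
    {p q : K[X]} (hq : q ≠ 0) (hlt : (q.natDegree : ℤ) < (emb q * α - emb p).order) :
    ∃ n, p * contQ α n = contP α n * q := by
  obtain ⟨n, hle, hlt'⟩ := exists_natDegree_contQ_le_lt_succ h q.natDegree
  refine ⟨n, sub_eq_zero.mp ?_⟩
  by_contra hG
  have hsplit : emb (p * contQ α n - contP α n * q) =
      emb q * approxErr α n + -(emb (contQ α n) * (emb q * α - emb p)) := by
    simp only [approxErr, map_sub, map_mul]
    ring
  have h₁ : 0 < (emb q * approxErr α n).order := by
    rw [order_mul (emb_ne_zero hq) (approxErr_ne_zero h n), order_emb hq, order_approxErr h n]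
    omega
  have h₂ : 0 < (-(emb (contQ α n) * (emb q * α - emb p))).order := by
    rw [order_neg, order_mul (emb_ne_zero (contQ_ne_zero h n)) (emb_mul_sub_emb_ne_zero h hq p),
      order_emb (contQ_ne_zero h n)]
    omega
  have hpos := (lt_min h₁ h₂).trans_le (min_order_le_order_add (hsplit ▸ emb_ne_zero hG))
  rw [← hsplit, order_emb hG] at hpos
  omega

theorem natDegree_lt_order_of_convergent {α : LaurentSeries K} (h : ¬IsRat α) {p q : K[X]}
    (hq : q ≠ 0) (hpq : IsCoprime p q) {n : ℕ} (hn : p * contQ α n = contP α n * q) :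
    (q.natDegree : ℤ) < (emb q * α - emb p).order := by
  have hqn := contQ_ne_zero h n
  have hdvd : q ∣ contQ α n :=
    hpq.symm.dvd_of_dvd_mul_left ⟨contP α n, by rw [hn, mul_comm]⟩
  have hdeg := natDegree_le_of_dvd hdvd hqn
  have hsplit : emb (contQ α n) * (emb q * α - emb p) = emb q * approxErr α n := by
    have hn' := congrArg emb hn
    rw [map_mul, map_mul] at hn'
    rw [approxErr]
    linear_combination -hn'
  have horder := congrArg order hsplit
  rw [order_mul (emb_ne_zero hqn) (emb_mul_sub_emb_ne_zero h hq p),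
    order_mul (emb_ne_zero hq) (approxErr_ne_zero h n), order_emb hqn, order_emb hq,
    order_approxErr h n] at horder
  have := natDegree_contQ_lt_succ h n
  omega

theorem exists_convergent_iff_natDegree_lt_order {α : LaurentSeries K} (h : ¬IsRat α)
    {p q : K[X]} (hq : q ≠ 0) (hpq : IsCoprime p q) :
    (∃ n, p * contQ α n = contP α n * q) ↔ (q.natDegree : ℤ) < (emb q * α - emb p).order :=
  ⟨fun ⟨_, hn⟩ => natDegree_lt_order_of_convergent h hq hpq hn,
    exists_convergent_of_natDegree_lt_order h hq⟩

theorem not_isRat_of_sq_eq_emb {D : K[X]} (hD : ¬IsSquare D) {β : LaurentSeries K}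
    (hβ : β ^ 2 = emb D) : ¬IsRat β := by
  rintro ⟨a, b, hb, hab⟩
  have hsq : a ^ 2 = D * b ^ 2 := emb_injective (by
    rw [map_mul, map_pow, map_pow, ← hβ, ← hab]
    ring)
  obtain ⟨c, rfl⟩ :=
    (IsIntegrallyClosed.pow_dvd_pow_iff two_ne_zero).mp ⟨D, hsq.trans (mul_comm _ _)⟩
  exact hD ⟨c, mul_left_cancel₀ (pow_ne_zero 2 hb) (by linear_combination -hsq)⟩

theorem two_mul_order_of_sq_eq_emb {D : K[X]} (hD : D ≠ 0) {β : LaurentSeries K}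
    (hβ : β ^ 2 = emb D) : 2 * β.order = -(D.natDegree : ℤ) := by
  have h := congrArg order hβ
  rwa [order_pow, order_emb hD, nsmul_eq_mul, Nat.cast_ofNat] at h

theorem emb_sq_sub_mul_sq {D : K[X]} {β : LaurentSeries K} (hβ : β ^ 2 = emb D) (p q : K[X]) :
    emb (p ^ 2 - D * q ^ 2) = -((emb q * β - emb p) * (emb q * β + emb p)) := by
  simp only [map_sub, map_mul, map_pow, ← hβ]
  ring

theorem emb_mul_add_emb_ne_zero {α : LaurentSeries K} (h : ¬IsRat α) {q : K[X]} (hq : q ≠ 0)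
    (p : K[X]) : emb q * α + emb p ≠ 0 := by
  simpa using emb_mul_sub_emb_ne_zero h hq (-p)

theorem sq_sub_mul_sq_ne_zero {D : K[X]} {β : LaurentSeries K} (h : ¬IsRat β)
    (hβ : β ^ 2 = emb D) {q : K[X]} (hq : q ≠ 0) (p : K[X]) : p ^ 2 - D * q ^ 2 ≠ 0 := by
  intro h0
  have h0' := emb_sq_sub_mul_sq hβ p q
  rw [h0, map_zero, eq_comm, neg_eq_zero] at h0'
  exact mul_ne_zero (emb_mul_sub_emb_ne_zero h hq p) (emb_mul_add_emb_ne_zero h hq p) h0'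

theorem natDegree_sq_sub_mul_sq_lt_iff {D : K[X]} {β : LaurentSeries K} (h : ¬IsRat β)
    (h2 : (2 : K) ≠ 0) (hβ : β ^ 2 = emb D) {q : K[X]} (hq : q ≠ 0) (p : K[X]) :
    ((p ^ 2 - D * q ^ 2).natDegree : ℤ) < -β.order ↔
      (q.natDegree : ℤ) < (emb q * β - emb p).order ∨
        (q.natDegree : ℤ) < (emb q * β + emb p).order := by
  set u := emb q * β - emb p
  set v := emb q * β + emb p
  have hu : u ≠ 0 := emb_mul_sub_emb_ne_zero h hq p
  have hv : v ≠ 0 := emb_mul_add_emb_ne_zero h hq p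
  have hD : D ≠ 0 := by
    rintro rfl
    exact pow_ne_zero 2 (ne_zero_of_not_isRat h) (by rw [hβ, map_zero])
  have hβord := two_mul_order_of_sq_eq_emb hD hβ
  have hprod : ((p ^ 2 - D * q ^ 2).natDegree : ℤ) = -(u.order + v.order) := by
    rw [← order_mul hu hv, ← order_neg, ← emb_sq_sub_mul_sq hβ,
      order_emb (sq_sub_mul_sq_ne_zero h hβ hq p), neg_neg]
  have h2C : (2 : LaurentSeries K) = HahnSeries.C 2 := (map_ofNat HahnSeries.C 2).symm
  have hqβ : emb q * β ≠ 0 := mul_ne_zero (emb_ne_zero hq) (ne_zero_of_not_isRat h)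
  have huv : u + v = HahnSeries.C 2 * (emb q * β) := by rw [← h2C]; ring
  have huv0 : u + v ≠ 0 := huv ▸ mul_ne_zero (C_ne_zero h2) hqβ
  have hsum : (u + v).order = β.order - q.natDegree := by
    rw [huv, order_mul (C_ne_zero h2) hqβ, order_C,
      order_mul (emb_ne_zero hq) (ne_zero_of_not_isRat h), order_emb hq]
    ring
  constructor
  · intro hlt
    rcases min_le_iff.mp (hsum ▸ min_order_le_order_add huv0) with hle | hle
    · right; omega
    · left; omega
  · rintro (hlt | hlt)
    · have hvord := order_add_of_order_lt huv0 (neg_ne_zero.mpr hu) (by rw [order_neg]; omega)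
      rw [show u + v + -u = v by ring] at hvord
      omega
    · have huord := order_add_of_order_lt huv0 (neg_ne_zero.mpr hv) (by rw [order_neg]; omega)
      rw [show u + v + -v = u by ring] at huord
      omega

end PaperCF

open PaperCF in
theorem convergent_of_sqrt_iff_pell_degree_general {K : Type*} [Field K]
    (hchar : ringChar K ≠ 2) (D : Polynomial K)
    (hDpos : 0 < D.natDegree)
    (hDnsq : ¬ IsSquare D)
    (β : LaurentSeries K) (hβ : β ^ 2 = emb D)
    (p q : Polynomial K) (hq : q ≠ 0) (hpq : IsCoprime p q) :
    (∃ n : ℕ, p * contQ β n = contP β n * q ∨ p * contQ β n = -(contP β n * q)) ↔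
      (p ^ 2 - D * q ^ 2).degree ≤ ((D.natDegree / 2 - 1 : ℕ) : WithBot ℕ) := by
  have hirr := not_isRat_of_sq_eq_emb hDnsq hβ
  have hβord := two_mul_order_of_sq_eq_emb (by rintro rfl; simp at hDpos) hβ
  have hneg (n : ℕ) :
      p * contQ β n = -(contP β n * q) ↔ -p * contQ β n = contP β n * q := by
    rw [neg_mul, neg_eq_iff_eq_neg]
  simp only [exists_or, hneg]
  rw [exists_convergent_iff_natDegree_lt_order hirr hq hpq,
    exists_convergent_iff_natDegree_lt_order hirr hq hpq.neg_left, map_neg, sub_neg_eq_add,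
    ← natDegree_sq_sub_mul_sq_lt_iff hirr (Ring.two_ne_zero hchar) hβ hq p,
    ← natDegree_le_iff_degree_le]
  omega

open PaperCF in
/-- Let `char K ≠ 2`, `D ∈ S_K` of degree `2d`, `√D = β` a square root
of `D` in `K((T⁻¹))`, and `p, q` coprime with `q ≠ 0`. Then `p/q` is, up to sign, a
convergent of `√D` iff `deg(p² − D q²) ≤ d − 1`. -/
theorem convergent_of_sqrt_iff_pell_degree {K : Type*} [Field K]
    (hchar : ringChar K ≠ 2) (D : Polynomial K)
    (hDeven : Even D.natDegree) (hDpos : 0 < D.natDegree)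
    (hDnsq : ¬ IsSquare D) (hDlead : IsSquare D.leadingCoeff)
    (β : LaurentSeries K) (hβ : β ^ 2 = emb D)
    (p q : Polynomial K) (hq : q ≠ 0) (hpq : IsCoprime p q) :
    (∃ n : ℕ, p * contQ β n = contP β n * q ∨ p * contQ β n = -(contP β n * q)) ↔
      (p ^ 2 - D * q ^ 2).degree ≤ ((D.natDegree / 2 - 1 : ℕ) : WithBot ℕ) :=
  convergent_of_sqrt_iff_pell_degree_general hchar D hDpos hDnsq β hβ p q hq hpq
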